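/- Let (X,ρ) be a compact metric space and f : X → X continuous, and suppose there is a nonempty closed f-invariant set Y ⊆ X and a continuous surjection π : Y → Σ_p with π ∘ f = σ ∘ π, where p ≥ 2 and (Σ_p, σ) is the one-sided full shift on p symbols. Then there is ε₀ > 0 such that: for every α ∈ Σ_p there is a point x_α ∈ Y, with x_α ≠ x_β whenever α ≠ β, satisfying C^f_m(x_α, n, ε) ≤ C^σ_m(α, n, 1/2) for every ε ∈ (0, ε₀] and all m, n ∈ ℕ; consequently entr⁺(f, x_α) ≥ entr⁺(σ, α) and entr⁻(f, x_α) ≥ entr⁻(σ, α). -/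

import Mathlib

open Filter Topology Set MeasureTheory

section Defs

variable {X : Type*} [MetricSpace X]

/-- Bowen's metric `ρ^f_m(y,z) = max_{0 ≤ i < m} ρ(f^i y, f^i z)`. -/
noncomputable def bowenDist (f : X → X) (m : ℕ) (y z : X) : ℝ :=
  (((Finset.range m).sup fun i => nndist (f^[i] y) (f^[i] z)) : NNReal)

open scoped Classical in
/-- The correlation sum `C^f_m(x,n,ε)`. -/
noncomputable def corrSum (f : X → X) (m : ℕ) (x : X) (n : ℕ) (ε : ℝ) : ℝ :=
  (((Finset.range n ×ˢ Finset.range n).filter fun q =>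
      bowenDist f m (f^[q.1] x) (f^[q.2] x) ≤ ε).card : ℝ) / (n : ℝ) ^ 2

/-- `ĉ^f_m(x,ε) = limsup_{n→∞} C^f_m(x,n,ε)`. -/
noncomputable def corrUpper (f : X → X) (m : ℕ) (x : X) (ε : ℝ) : ℝ :=
  Filter.limsup (fun n : ℕ => corrSum f m x n ε) Filter.atTop

/-- `č^f_m(x,ε) = liminf_{n→∞} C^f_m(x,n,ε)`. -/
noncomputable def corrLower (f : X → X) (m : ℕ) (x : X) (ε : ℝ) : ℝ :=
  Filter.liminf (fun n : ℕ => corrSum f m x n ε) Filter.atTop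

/-- The upper local correlation entropy `entr⁺(f,x) = lim_{ε→0⁺} limsup_m (−1/m) log č^f_m(x,ε)`;
the limit as `ε → 0⁺` exists by monotonicity in `ε`, and is expressed here as a `limsup`
along `𝓝[>] 0` (with values in `EReal`). -/
noncomputable def entrUpper (f : X → X) (x : X) : EReal :=
  Filter.limsup (fun ε : ℝ =>
      Filter.limsup (fun m : ℕ => ((-(1 / (m : ℝ)) * Real.log (corrLower f m x ε) : ℝ) : EReal))
        Filter.atTop)
    (𝓝[>] (0 : ℝ))

/-- The lower local correlation entropy `entr⁻(f,x) = lim_{ε→0⁺} liminf_m (−1/m) log ĉ^f_m(x,ε)`. -/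
noncomputable def entrLower (f : X → X) (x : X) : EReal :=
  Filter.limsup (fun ε : ℝ =>
      Filter.liminf (fun m : ℕ => ((-(1 / (m : ℝ)) * Real.log (corrUpper f m x ε) : ℝ) : EReal))
        Filter.atTop)
    (𝓝[>] (0 : ℝ))

/-- `r_m(ε,K)`: the smallest cardinality of a subset of `K` which `(m,ε)`-spans `K`. -/
noncomputable def spanNumOn (f : X → X) (K : Set X) (m : ℕ) (ε : ℝ) : ℕ :=
  sInf {k : ℕ | ∃ A : Finset X, ↑A ⊆ K ∧ A.card = k ∧ ∀ y ∈ K, ∃ a ∈ A, bowenDist f m y a ≤ ε}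

/-- Bowen's topological entropy of `f` on `K` (for `K = univ`, of `f` itself;
for closed invariant `K`, of the restriction of `f` to `K`). -/
noncomputable def topEntropyOn (f : X → X) (K : Set X) : EReal :=
  Filter.limsup (fun ε : ℝ =>
      Filter.limsup (fun n : ℕ => (((1 / (n : ℝ)) * Real.log (spanNumOn f K n ε) : ℝ) : EReal))
        Filter.atTop)
    (𝓝[>] (0 : ℝ))

end Defs

/-- The one-sided full shift map `σ` on `Σ_p = {0,…,p−1}^{ℕ₀}`. -/
def shiftMap (p : ℕ) : (ℕ → Fin p) → (ℕ → Fin p) := fun x n => x (n + 1)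

/-- The metric `d(x,y) = 2^{-min{i : x_i ≠ y_i}}` on `Σ_p`
(`PiNat.dist x y = (1/2) ^ PiNat.firstDiff x y` for `x ≠ y`). -/
noncomputable instance fullShiftMetric (p : ℕ) : MetricSpace (ℕ → Fin p) := PiNat.metricSpace

/-!
Take `x_α` in the fibre `π⁻¹(α)`. Since `π` is uniformly continuous and semiconjugates `f|_Y`
to `σ`, there is `ε₀` such that `ε₀`-closeness of two `f`-orbit segments in Bowen's metric forces
`1/2`-closeness of their `π`-images, so every pair counted by `C^f_m(x_α,n,ε)` is counted by
`C^σ_m(α,n,1/2)`, and likewise for any target radius `δ` in place of `1/2`. The entropy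
inequalities then follow from monotonicity of `-log`, once the correlation sums of `f` are
bounded away from `0`; on a compact space this holds by pigeonhole over a finite cover by balls.
-/

section CorrelationSums

variable {X : Type*} [MetricSpace X] {f : X → X}

lemma bowenDist_le_iff {m : ℕ} {y z : X} {ε : ℝ} (hε : 0 ≤ ε) :
    bowenDist f m y z ≤ ε ↔ ∀ i < m, dist (f^[i] y) (f^[i] z) ≤ ε := by
  rw [bowenDist, ← Real.coe_toNNReal ε hε, NNReal.coe_le_coe, Finset.sup_le_iff]
  simp only [Finset.mem_range, ← NNReal.coe_le_coe, Real.coe_toNNReal ε hε, coe_nndist]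

lemma bowenDist_restrict {Y : Set X} (hY : MapsTo f Y Y) (m : ℕ) (y z : Y) :
    bowenDist (hY.restrict f Y Y) m y z = bowenDist f m y z := by
  simp only [bowenDist, hY.iterate_restrict]
  rfl

lemma corrSum_restrict {Y : Set X} (hY : MapsTo f Y Y) (m : ℕ) (y : Y) (n : ℕ) (ε : ℝ) :
    corrSum (hY.restrict f Y Y) m y n ε = corrSum f m y n ε := by
  simp only [corrSum, bowenDist_restrict, hY.iterate_restrict]
  rfl

lemma corrSum_nonneg (m : ℕ) (x : X) (n : ℕ) (ε : ℝ) : 0 ≤ corrSum f m x n ε := by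
  unfold corrSum
  positivity

lemma corrSum_le_one (m : ℕ) (x : X) (n : ℕ) (ε : ℝ) : corrSum f m x n ε ≤ 1 := by
  unfold corrSum
  refine div_le_one_of_le₀ ?_ (by positivity)
  calc ((Finset.filter _ _).card : ℝ) ≤ (Finset.range n ×ˢ Finset.range n).card := by
        exact_mod_cast Finset.card_le_card (Finset.filter_subset _ _)
    _ = (n : ℝ) ^ 2 := by simp [Finset.card_product, sq]

lemma isBoundedUnder_le_corrSum (m : ℕ) (x : X) (ε : ℝ) :
    IsBoundedUnder (· ≤ ·) atTop fun n => corrSum f m x n ε :=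
  isBoundedUnder_of ⟨1, fun n => corrSum_le_one m x n ε⟩

lemma isBoundedUnder_ge_corrSum (m : ℕ) (x : X) (ε : ℝ) :
    IsBoundedUnder (· ≥ ·) atTop fun n => corrSum f m x n ε :=
  isBoundedUnder_of ⟨0, fun n => corrSum_nonneg m x n ε⟩

lemma sq_card_div_le_corrSum {m : ℕ} {x : X} {n : ℕ} {ε : ℝ} {S : Finset ℕ}
    (hS : S ⊆ Finset.range n)
    (hclose : ∀ i ∈ S, ∀ j ∈ S, bowenDist f m (f^[i] x) (f^[j] x) ≤ ε) :
    ((S.card : ℝ) / n) ^ 2 ≤ corrSum f m x n ε := by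
  rw [corrSum, div_pow]
  refine div_le_div_of_nonneg_right ?_ (by positivity)
  calc (S.card : ℝ) ^ 2 = (S ×ˢ S).card := by simp [Finset.card_product, sq]
    _ ≤ _ := by
      refine mod_cast Finset.card_le_card fun q hq => ?_
      rw [Finset.mem_product] at hq
      exact Finset.mem_filter.2
        ⟨Finset.mem_product.2 ⟨hS hq.1, hS hq.2⟩, hclose _ hq.1 _ hq.2⟩

lemma exists_pos_bowenDist_le_of_dist_lt [CompactSpace X] (hf : Continuous f) (m : ℕ)
    {ε : ℝ} (hε : 0 < ε) : ∃ δ > 0, ∀ y z : X, dist y z < δ → bowenDist f m y z ≤ ε := by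
  have hclose : ∀ᶠ q in uniformity X, ∀ i ∈ Finset.range m, dist (f^[i] q.1) (f^[i] q.2) < ε :=
    (eventually_all_finset _).2 fun i _ =>
      CompactSpace.uniformContinuous_of_continuous (hf.iterate i) (Metric.dist_mem_uniformity hε)
  obtain ⟨δ, hδ, hδε⟩ := Metric.mem_uniformity_dist.1 hclose
  exact ⟨δ, hδ, fun y z hyz =>
    (bowenDist_le_iff hε.le).2 fun i hi => (hδε hyz i (Finset.mem_range.2 hi)).le⟩

/-- Some ball of a finite cover by balls of radius `δ / 2` contains at least `n / N` of the first
`n` orbit points, and these are pairwise `δ`-close. -/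
lemma exists_pos_forall_le_corrSum [CompactSpace X] (hf : Continuous f) (m : ℕ) (x : X)
    {ε : ℝ} (hε : 0 < ε) : ∃ c > 0, ∀ n > 0, c ≤ corrSum f m x n ε := by
  classical
  obtain ⟨δ, hδ, hclose⟩ := exists_pos_bowenDist_le_of_dist_lt hf m hε
  obtain ⟨t, -, hcover⟩ := isCompact_univ.elim_nhds_subcover (fun y : X => Metric.ball y (δ / 2))
    fun y _ => Metric.ball_mem_nhds y (half_pos hδ)
  have hcenter : ∀ i : ℕ, ∃ c ∈ t, f^[i] x ∈ Metric.ball c (δ / 2) := fun i => by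
    simpa using hcover (mem_univ (f^[i] x))
  choose c hct hc using hcenter
  have ht : (t.card : ℝ) ≠ 0 := by exact_mod_cast (Finset.card_pos.2 ⟨c 0, hct 0⟩).ne'
  refine ⟨1 / (t.card : ℝ) ^ 2, by positivity, fun n hn => ?_⟩
  obtain ⟨b, -, hb⟩ := Finset.exists_le_card_fiber_of_nsmul_le_card_of_maps_to
    (s := Finset.range n) (fun i _ => hct i) ⟨c 0, hct 0⟩ (b := (n : ℝ) / t.card)
    (by rw [nsmul_eq_mul, Finset.card_range, mul_div_cancel₀ _ ht])
  have hn' : (n : ℝ) ≠ 0 := by exact_mod_cast hn.ne'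
  calc 1 / (t.card : ℝ) ^ 2 = ((n / t.card) / n) ^ 2 := by field_simp
    _ ≤ ((((Finset.range n).filter fun i => c i = b).card : ℝ) / n) ^ 2 := by gcongr
    _ ≤ corrSum f m x n ε := by
      refine sq_card_div_le_corrSum (Finset.filter_subset _ _) fun i hi j hj => hclose _ _ ?_
      have hib := Metric.mem_ball.1 (hc i)
      have hjb := Metric.mem_ball.1 (hc j)
      rw [(Finset.mem_filter.1 hi).2] at hib
      rw [(Finset.mem_filter.1 hj).2] at hjb
      linarith [dist_triangle_right (f^[i] x) (f^[j] x) b]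

lemma corrLower_pos [CompactSpace X] (hf : Continuous f) (m : ℕ) (x : X) {ε : ℝ}
    (hε : 0 < ε) : 0 < corrLower f m x ε := by
  obtain ⟨c, hc, hle⟩ := exists_pos_forall_le_corrSum hf m x hε
  exact hc.trans_le <| le_liminf_of_le (isBoundedUnder_le_corrSum m x ε).isCoboundedUnder_ge
    ((eventually_gt_atTop 0).mono hle)

lemma corrUpper_pos [CompactSpace X] (hf : Continuous f) (m : ℕ) (x : X) {ε : ℝ}
    (hε : 0 < ε) : 0 < corrUpper f m x ε := by
  obtain ⟨c, hc, hle⟩ := exists_pos_forall_le_corrSum hf m x hε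
  exact hc.trans_le <| le_limsup_of_frequently_le
    ((eventually_gt_atTop 0).mono hle).frequently (isBoundedUnder_le_corrSum m x ε)

end CorrelationSums

section Comparison

variable {X Z : Type*} [MetricSpace X] [MetricSpace Z] {f : X → X} {g : Z → Z}

lemma corrSum_le_corrSum_of_bowenDist_le {φ : X → Z} (hφ : Function.Semiconj φ f g) {m : ℕ}
    {ε ε' : ℝ} (h : ∀ y y', bowenDist f m y y' ≤ ε → bowenDist g m (φ y) (φ y') ≤ ε')
    (x : X) (n : ℕ) : corrSum f m x n ε ≤ corrSum g m (φ x) n ε' := by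
  unfold corrSum
  refine div_le_div_of_nonneg_right (mod_cast Finset.card_le_card fun q hq => ?_) (by positivity)
  rw [Finset.mem_filter] at hq ⊢
  simpa only [hφ.iterate_right _ x] using And.intro hq.1 (h _ _ hq.2)

lemma Function.Semiconj.exists_pos_bowenDist_le {φ : X → Z} (hφ : Function.Semiconj φ f g)
    (huc : UniformContinuous φ) {ε' : ℝ} (hε' : 0 < ε') :
    ∃ ε > 0, ∀ m y y', bowenDist f m y y' ≤ ε → bowenDist g m (φ y) (φ y') ≤ ε' := by
  obtain ⟨δ, hδ, hφδ⟩ := Metric.uniformContinuous_iff.1 huc ε' hε'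
  refine ⟨δ / 2, half_pos hδ, fun m y y' hyy' => (bowenDist_le_iff hε'.le).2 fun i hi => ?_⟩
  have hi := (bowenDist_le_iff (half_pos hδ).le).1 hyy' i hi
  rw [← hφ.iterate_right, ← hφ.iterate_right]
  exact (hφδ (hi.trans_lt (half_lt_self hδ))).le

lemma Function.Semiconj.exists_pos_corrSum_le {φ : X → Z} (hφ : Function.Semiconj φ f g)
    (huc : UniformContinuous φ) {ε' : ℝ} (hε' : 0 < ε') :
    ∃ ε₀ > 0, ∀ ε ≤ ε₀, ∀ m x n, corrSum f m x n ε ≤ corrSum g m (φ x) n ε' := by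
  obtain ⟨ε₀, hε₀, h⟩ := hφ.exists_pos_bowenDist_le huc hε'
  exact ⟨ε₀, hε₀, fun ε hε m => corrSum_le_corrSum_of_bowenDist_le hφ
    fun y y' hyy' => h m y y' (hyy'.trans hε)⟩

variable {x : X} {z : Z} {m : ℕ} {ε δ : ℝ}

lemma corrLower_le_corrLower (h : ∀ n, corrSum f m x n ε ≤ corrSum g m z n δ) :
    corrLower f m x ε ≤ corrLower g m z δ :=
  liminf_le_liminf (.of_forall h) (isBoundedUnder_ge_corrSum m x ε)
    (isBoundedUnder_le_corrSum m z δ).isCoboundedUnder_ge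

lemma corrUpper_le_corrUpper (h : ∀ n, corrSum f m x n ε ≤ corrSum g m z n δ) :
    corrUpper f m x ε ≤ corrUpper g m z δ :=
  limsup_le_limsup (.of_forall h) (isBoundedUnder_ge_corrSum m x ε).isCoboundedUnder_le
    (isBoundedUnder_le_corrSum m z δ)

lemma limsup_le_limsup_of_eventually_eventually_le {α β : Type*} [CompleteLattice β]
    {l : Filter α} [l.NeBot] {u v : α → β} (h : ∀ᶠ a in l, ∀ᶠ b in l, u a ≤ v b) :
    limsup u l ≤ limsup v l :=
  limsup_le_of_le (by isBoundedDefault) (h.mono fun _ ha => le_limsup_of_frequently_le' ha.frequently)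

lemma neg_one_div_mul_log_le_of_le (m : ℕ) {a b : ℝ} (ha : 0 < a) (hab : a ≤ b) :
    -(1 / (m : ℝ)) * Real.log b ≤ -(1 / (m : ℝ)) * Real.log a :=
  mul_le_mul_of_nonpos_left (Real.log_le_log ha hab) (neg_nonpos.2 (by positivity))

lemma entrUpper_le_entrUpper (hpos : ∀ m, ∀ ε > 0, 0 < corrLower f m x ε)
    (hcmp : ∀ δ > 0, ∀ᶠ ε in 𝓝[>] 0, ∀ m n, corrSum f m x n ε ≤ corrSum g m z n δ) :
    entrUpper g z ≤ entrUpper f x := by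
  refine limsup_le_limsup_of_eventually_eventually_le
    (eventually_nhdsWithin_of_forall fun δ hδ => ?_)
  filter_upwards [hcmp δ hδ, self_mem_nhdsWithin] with ε hε hε₀
  exact limsup_le_limsup (.of_forall fun m => EReal.coe_le_coe_iff.2 <|
    neg_one_div_mul_log_le_of_le m (hpos m ε hε₀) (corrLower_le_corrLower (hε m)))

lemma entrLower_le_entrLower (hpos : ∀ m, ∀ ε > 0, 0 < corrUpper f m x ε)
    (hcmp : ∀ δ > 0, ∀ᶠ ε in 𝓝[>] 0, ∀ m n, corrSum f m x n ε ≤ corrSum g m z n δ) :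
    entrLower g z ≤ entrLower f x := by
  refine limsup_le_limsup_of_eventually_eventually_le
    (eventually_nhdsWithin_of_forall fun δ hδ => ?_)
  filter_upwards [hcmp δ hδ, self_mem_nhdsWithin] with ε hε hε₀
  exact liminf_le_liminf (.of_forall fun m => EReal.coe_le_coe_iff.2 <|
    neg_one_div_mul_log_le_of_le m (hpos m ε hε₀) (corrUpper_le_corrUpper (hε m)))

end Comparison

theorem extension_of_full_shift_general {X : Type*} [MetricSpace X] [CompactSpace X]
    (f : X → X) (hf : Continuous f) (p : ℕ)
    (Y : Set X) (hYcl : IsClosed Y) (hYinv : Set.MapsTo f Y Y)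
    (π : Y → (ℕ → Fin p)) (hπcont : Continuous π) (hπsurj : Function.Surjective π)
    (hsemi : ∀ (y : X) (hy : y ∈ Y) (hfy : f y ∈ Y),
      π ⟨f y, hfy⟩ = shiftMap p (π ⟨y, hy⟩)) :
    ∃ ε₀ : ℝ, 0 < ε₀ ∧
      ∃ sel : (ℕ → Fin p) → X, Function.Injective sel ∧
        ∀ α : ℕ → Fin p, sel α ∈ Y ∧
          (∀ ε : ℝ, 0 < ε → ε ≤ ε₀ → ∀ m n : ℕ, 0 < m → 0 < n →
            corrSum f m (sel α) n ε ≤ corrSum (shiftMap p) m α n (1 / 2)) ∧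
          entrUpper (shiftMap p) α ≤ entrUpper f (sel α) ∧
          entrLower (shiftMap p) α ≤ entrLower f (sel α) := by
  have : CompactSpace Y := isCompact_iff_compactSpace.1 hYcl.isCompact
  have hπuc : UniformContinuous π := CompactSpace.uniformContinuous_of_continuous hπcont
  have hsc : Function.Semiconj π (hYinv.restrict f Y Y) (shiftMap p) :=
    fun y => hsemi y y.2 (hYinv y.2)
  have hcmp : ∀ δ > 0, ∃ ε₀ > 0, ∀ ε ≤ ε₀, ∀ m (y : Y) n,
      corrSum f m y n ε ≤ corrSum (shiftMap p) m (π y) n δ := fun δ hδ => by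
    simpa only [corrSum_restrict] using hsc.exists_pos_corrSum_le hπuc hδ
  obtain ⟨ε₀, hε₀, hcmp₀⟩ := hcmp (1 / 2) one_half_pos
  obtain ⟨s, hs⟩ : ∃ s : (ℕ → Fin p) → Y, Function.RightInverse s π :=
    ⟨_, Function.rightInverse_surjInv hπsurj⟩
  refine ⟨ε₀, hε₀, fun α => s α, Subtype.val_injective.comp hs.injective, fun α => ?_⟩
  have hcmpα : ∀ δ > 0, ∀ᶠ ε in 𝓝[>] 0, ∀ m n, corrSum f m (s α) n ε ≤
      corrSum (shiftMap p) m α n δ := fun δ hδ => by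
    obtain ⟨ε₁, hε₁, h⟩ := hcmp δ hδ
    filter_upwards [Ioc_mem_nhdsGT hε₁] with ε hε m n
    simpa only [hs α] using h ε hε.2 m (s α) n
  refine ⟨(s α).2, fun ε _ hε m n _ _ => ?_,
    entrUpper_le_entrUpper (fun m _ => corrLower_pos hf m _) hcmpα,
    entrLower_le_entrLower (fun m _ => corrUpper_pos hf m _) hcmpα⟩
  simpa only [hs α] using hcmp₀ ε hε m (s α) n

/-- If `(Y,f)` is a subsystem of `(X,f)` which is a topological extension of the full shift
`(Σ_p,σ)`, then there is `ε₀ > 0` and for every `α ∈ Σ_p` a point `x_α ∈ Y` (injectively chosen)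
with `C^f_m(x_α,n,ε) ≤ C^σ_m(α,n,1/2)` for `ε ∈ (0,ε₀]`; consequently
`entr⁺(f,x_α) ≥ entr⁺(σ,α)` and `entr⁻(f,x_α) ≥ entr⁻(σ,α)`. -/
theorem extension_of_full_shift {X : Type*} [MetricSpace X] [CompactSpace X]
    (f : X → X) (hf : Continuous f) (p : ℕ) (hp : 2 ≤ p)
    (Y : Set X) (hYne : Y.Nonempty) (hYcl : IsClosed Y) (hYinv : Set.MapsTo f Y Y)
    (π : Y → (ℕ → Fin p)) (hπcont : Continuous π) (hπsurj : Function.Surjective π)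
    (hsemi : ∀ (y : X) (hy : y ∈ Y) (hfy : f y ∈ Y),
      π ⟨f y, hfy⟩ = shiftMap p (π ⟨y, hy⟩)) :
    ∃ ε₀ : ℝ, 0 < ε₀ ∧
      ∃ sel : (ℕ → Fin p) → X, Function.Injective sel ∧
        ∀ α : ℕ → Fin p, sel α ∈ Y ∧
          (∀ ε : ℝ, 0 < ε → ε ≤ ε₀ → ∀ m n : ℕ, 0 < m → 0 < n →
            corrSum f m (sel α) n ε ≤ corrSum (shiftMap p) m α n (1 / 2)) ∧
          entrUpper (shiftMap p) α ≤ entrUpper f (sel α) ∧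
          entrLower (shiftMap p) α ≤ entrLower f (sel α) :=
  extension_of_full_shift_general f hf p Y hYcl hYinv π hπcont hπsurj hsemi
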